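/- The family of SIP subsets of ℕ is not a filterdual; that is, it fails the Ramsey property: there exist sets B₁, B₂ ⊆ ℕ such that B₁ ∪ B₂ is an SIP set but neither B₁ nor B₂ is an SIP set. Concretely, for any irrational a ∈ ℝ, the set {n ∈ ℕ : the fractional part of n·a lies in [0,1/8) ∪ (7/8,1)} is an SIP set, and it is the union of B₁ = {n ∈ ℕ : the fractional part of n·a lies in [0,1/8)} and B₂ = {n ∈ ℕ : the fractional part of n·a lies in (7/8,1)}, neither of which is an SIP set. -/

import Mathlib

/-- `IP A`: the set of all finite sums of distinct elements of `A ⊆ ℤ`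
(sums over finite subsets `F ⊆ A`, with the empty sum equal to `0`). -/
def IP (A : Set ℤ) : Set ℤ :=
  {t | ∃ F : Finset ℤ, ↑F ⊆ A ∧ t = ∑ x ∈ F, x}

/-- `SIP A = IP A - IP A`. -/
def SIP (A : Set ℤ) : Set ℤ :=
  {d | ∃ s ∈ IP A, ∃ t ∈ IP A, d = s - t}

/-- The positive part `S_+ = S ∩ ℕ` of a set of integers. -/
def posPart (S : Set ℤ) : Set ℤ := S ∩ {n : ℤ | 0 < n}

/-- `B` (a set of positive integers) is an SIP set: there is an infinite set
`A` of positive integers with `SIP(A)_+ ⊆ B`. -/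
def IsSIPSet (B : Set ℤ) : Prop :=
  ∃ A : Set ℤ, A ⊆ {n : ℤ | 0 < n} ∧ A.Infinite ∧ posPart (SIP A) ⊆ B

/-!
Choose positive integers `n₀ < n₁ < ⋯` with `‖n_k a‖ ≤ δ / 2 ^ (k + 3)`, where `‖·‖` is the
distance to the nearest integer. Every `d ∈ SIP {n_k}` then has `‖d a‖ ≤ δ / 2`, so `fract (d a)`
lies within `δ` of `0` or `1`: the union is an SIP set.

Conversely let `a` be irrational, `δ ≤ 1 / 2` and `SIP(A)_+ ⊆ {n : fract (n a) < δ}`.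
For `x < y` in `A`, `fract ((y - x) a) < δ` forces `fract (x a) < fract (y a)`; and over a finite
`F ⊆ A` the fractional parts add up without carry, so their sum stays below `δ`. Since
infinitely many elements of `A` have fractional part above `fract (x₀ a) > 0`, this is
impossible. The set `{n : fract (n a) > 1 - δ}` is the previous one for `-a`.
-/

open Filter Finset

namespace Int

lemma fract_sum_of_sum_fract_lt_one {ι : Type*} (s : Finset ι) (f : ι → ℝ)
    (h : ∑ i ∈ s, fract (f i) < 1) : fract (∑ i ∈ s, f i) = ∑ i ∈ s, fract (f i) := by
  refine fract_eq_iff.2 ⟨sum_nonneg fun i _ => fract_nonneg _, h, ∑ i ∈ s, ⌊f i⌋, ?_⟩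
  push_cast
  rw [← sum_sub_distrib]
  exact sum_congr rfl fun i _ => self_sub_fract _

lemma fract_lt_or_lt_fract_of_abs_sub_lt {x δ : ℝ} {m : ℤ} (h : |x - m| < δ) :
    fract x < δ ∨ 1 - δ < fract x := by
  rw [← fract_sub_intCast x m, fract]
  obtain ⟨h₁, h₂⟩ := abs_lt.1 h
  rcases le_or_gt 0 (x - m) with hx | hx
  · have : (0 : ℝ) ≤ ⌊x - m⌋ := mod_cast floor_nonneg.2 hx
    left; linarith
  · have : (⌊x - m⌋ : ℝ) ≤ -1 := mod_cast floor_le_neg_one_iff.2 hx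
    right; linarith

lemma fract_lt_fract_of_fract_sub_lt {x y δ : ℝ} (hδ : δ ≤ 1 / 2) (hx : fract x < δ)
    (hxy : fract (y - x) < δ) (hxy₀ : fract (y - x) ≠ 0) : fract x < fract y := by
  have hsub : fract (y - x) = fract (fract y - fract x) := by
    rw [show fract y - fract x = y - x - ((⌊y⌋ - ⌊x⌋ : ℤ) : ℝ) by
      push_cast; rw [fract, fract]; ring, fract_sub_intCast]
  by_contra! hle
  rcases hle.eq_or_lt with heq | hlt
  · simp [hsub, heq] at hxy₀
  · have : fract (fract y - fract x) = fract y - fract x + 1 :=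
      fract_eq_iff.2 ⟨by linarith [fract_nonneg y], by linarith, -1, by simp⟩
    linarith [fract_nonneg x, fract_nonneg y]

end Int

lemma Real.frequently_abs_mul_sub_round_lt (a : ℝ) {ε : ℝ} (hε : 0 < ε) :
    ∃ᶠ n : ℕ in atTop, |n * a - round (n * a)| < ε := by
  rw [frequently_atTop]
  intro N
  obtain ⟨M, hM⟩ := exists_nat_gt ε⁻¹
  have hM₀ : 0 < M := Nat.cast_pos.1 ((inv_pos.2 hε).trans hM)
  -- Dirichlet's theorem for `(N + 1) * a` produces a good multiple of `N + 1`, hence beyond `N`.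
  obtain ⟨k, hk₀, -, hk⟩ := exists_nat_abs_mul_sub_round_le ((N + 1) * a) hM₀
  refine ⟨(N + 1) * k, by nlinarith, ?_⟩
  calc |((N + 1) * k : ℕ) * a - round (((N + 1) * k : ℕ) * a)|
      = |k * ((N + 1) * a) - round (k * ((N + 1) * a))| := by push_cast; ring_nf
    _ ≤ 1 / (M + 1) := hk
    _ < ε := by rw [one_div]; exact inv_lt_of_inv_lt₀ hε (by linarith)

lemma sum_le_tsum_of_subset_range {g : ℕ → ℤ} (hg : Function.Injective g) {f : ℤ → ℝ}
    {ε : ℕ → ℝ} (hfε : ∀ k, f (g k) ≤ ε k) (hε₀ : 0 ≤ ε) (hε : Summable ε) {F : Finset ℤ}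
    (hF : ↑F ⊆ Set.range g) : ∑ x ∈ F, f x ≤ ∑' k, ε k := by
  classical
  rw [← Set.image_univ] at hF
  obtain ⟨K, -, rfl⟩ := subset_set_image_iff.1 hF
  rw [sum_image hg.injOn]
  exact (sum_le_sum fun k _ => hfε k).trans (hε.sum_le_tsum K fun k _ => hε₀ k)

lemma Irrational.fract_intCast_mul_ne_zero {a : ℝ} (ha : Irrational a) {n : ℤ} (hn : n ≠ 0) :
    Int.fract ((n : ℝ) * a) ≠ 0 :=
  (Int.fract_pos.2 ((ha.intCast_mul hn).ne_int _)).ne'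

section SIP

variable {A : Set ℤ} {a δ : ℝ}

lemma IP_subset_SIP : IP A ⊆ SIP A :=
  fun s hs => ⟨s, hs, 0, ⟨∅, by simp, by simp⟩, by simp⟩

lemma subset_IP : A ⊆ IP A :=
  fun x hx => ⟨{x}, by simpa using hx, by simp⟩

lemma subset_SIP : A ⊆ SIP A :=
  subset_IP.trans IP_subset_SIP

lemma sub_mem_SIP {x y : ℤ} (hx : x ∈ A) (hy : y ∈ A) : x - y ∈ SIP A :=
  ⟨x, subset_IP hx, y, subset_IP hy, rfl⟩

lemma exists_int_abs_mul_sub_le_of_mem_IP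
    (hA : ∀ F : Finset ℤ, ↑F ⊆ A → ∑ x ∈ F, |x * a - round (x * a)| ≤ δ) {s : ℤ}
    (hs : s ∈ IP A) : ∃ m : ℤ, |s * a - m| ≤ δ := by
  obtain ⟨F, hF, rfl⟩ := hs
  refine ⟨∑ x ∈ F, round (x * a), ?_⟩
  calc |((∑ x ∈ F, x : ℤ) : ℝ) * a - ((∑ x ∈ F, round (x * a) : ℤ) : ℝ)|
      = |∑ x ∈ F, (x * a - round (x * a))| := by push_cast; rw [sum_mul, sum_sub_distrib]
    _ ≤ ∑ x ∈ F, |x * a - round (x * a)| := abs_sum_le_sum_abs _ _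
    _ ≤ δ := hA F hF

lemma exists_int_abs_mul_sub_le_of_mem_SIP
    (hA : ∀ F : Finset ℤ, ↑F ⊆ A → ∑ x ∈ F, |x * a - round (x * a)| ≤ δ) {d : ℤ}
    (hd : d ∈ SIP A) : ∃ m : ℤ, |d * a - m| ≤ 2 * δ := by
  obtain ⟨s, hs, t, ht, rfl⟩ := hd
  obtain ⟨m, hm⟩ := exists_int_abs_mul_sub_le_of_mem_IP hA hs
  obtain ⟨n, hn⟩ := exists_int_abs_mul_sub_le_of_mem_IP hA ht
  refine ⟨m - n, ?_⟩
  calc |((s - t : ℤ) : ℝ) * a - ((m - n : ℤ) : ℝ)| = |(s * a - m) - (t * a - n)| := by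
        push_cast; ring_nf
    _ ≤ |s * a - m| + |t * a - n| := abs_sub _ _
    _ ≤ 2 * δ := by linarith

theorem isSIPSet_fract_lt_union_one_sub_lt_fract (hδ : 0 < δ) :
    IsSIPSet ({n : ℤ | 0 < n ∧ Int.fract ((n : ℝ) * a) < δ} ∪
      {n : ℤ | 0 < n ∧ 1 - δ < Int.fract ((n : ℝ) * a)}) := by
  obtain ⟨φ, hφ, hφa⟩ := extraction_forall_of_frequently fun k =>
    (Real.frequently_abs_mul_sub_round_lt a (by positivity : 0 < δ / 4 / 2 / 2 ^ k)).and_eventually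
      (eventually_gt_atTop 0)
  have hinj : Function.Injective fun k => (φ k : ℤ) := Nat.cast_injective.comp hφ.injective
  refine ⟨Set.range fun k => (φ k : ℤ), ?_, Set.infinite_range_of_injective hinj, ?_⟩
  · rintro _ ⟨k, rfl⟩
    exact Int.natCast_pos.2 (hφa k).2
  · have hA : ∀ F : Finset ℤ, ↑F ⊆ Set.range (fun k => (φ k : ℤ)) →
        ∑ x ∈ F, |x * a - round (x * a)| ≤ δ / 4 := fun F hF =>
      tsum_geometric_two' (δ / 4) ▸ sum_le_tsum_of_subset_range hinj
        (fun k => by simpa using (hφa k).1.le) (fun k => by positivity)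
        (summable_geometric_two' _) hF
    rintro d ⟨hd, hd₀ : 0 < d⟩
    obtain ⟨m, hm⟩ := exists_int_abs_mul_sub_le_of_mem_SIP hA hd
    have hm' : |d * a - m| < δ := hm.trans_lt (by linarith)
    rcases Int.fract_lt_or_lt_fract_of_abs_sub_lt hm' with h | h
    exacts [Or.inl ⟨hd₀, h⟩, Or.inr ⟨hd₀, h⟩]

lemma fract_mul_lt_fract_mul (ha : Irrational a) (hA₀ : A ⊆ {n | 0 < n}) (hδ : δ ≤ 1 / 2)
    (hA : ∀ d ∈ SIP A, 0 < d → Int.fract ((d : ℝ) * a) < δ) {x y : ℤ} (hx : x ∈ A) (hy : y ∈ A)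
    (hxy : x < y) : Int.fract ((x : ℝ) * a) < Int.fract ((y : ℝ) * a) := by
  have hyx : ((y - x : ℤ) : ℝ) * a = y * a - x * a := by push_cast; ring
  refine Int.fract_lt_fract_of_fract_sub_lt hδ (hA x (subset_SIP hx) (hA₀ hx)) ?_ ?_ <;>
    rw [← hyx]
  · exact hA _ (sub_mem_SIP hy hx) (sub_pos.2 hxy)
  · exact ha.fract_intCast_mul_ne_zero (sub_pos.2 hxy).ne'

lemma sum_fract_mul_lt (hA₀ : A ⊆ {n | 0 < n}) (hδ₀ : 0 < δ) (hδ : δ ≤ 1 / 2)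
    (hA : ∀ d ∈ SIP A, 0 < d → Int.fract ((d : ℝ) * a) < δ) {F : Finset ℤ} (hF : ↑F ⊆ A) :
    ∑ x ∈ F, Int.fract ((x : ℝ) * a) < δ := by
  induction F using Finset.induction_on with
  | empty => simpa using hδ₀
  | insert z F hz ih =>
    have hzA : z ∈ A := hF (mem_insert_self z F)
    have hFA : ↑F ⊆ A := fun x hx => hF (mem_insert_of_mem hx)
    have hlt : ∑ x ∈ insert z F, Int.fract ((x : ℝ) * a) < 1 := by
      rw [sum_insert hz]
      linarith [hA z (subset_SIP hzA) (hA₀ hzA), ih hFA]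
    have hpos : 0 < ∑ x ∈ insert z F, x :=
      sum_pos (fun x hx => hA₀ (hF hx)) (insert_nonempty z F)
    have hsum := hA _ (IP_subset_SIP ⟨_, hF, rfl⟩) hpos
    push_cast at hsum
    -- No carries occur while the sum of the fractional parts stays below `1`.
    rwa [← Int.fract_sum_of_sum_fract_lt_one _ _ hlt, ← sum_mul]

theorem not_isSIPSet_fract_lt (ha : Irrational a) (hδ : δ ≤ 1 / 2) :
    ¬ IsSIPSet {n : ℤ | 0 < n ∧ Int.fract ((n : ℝ) * a) < δ} := by
  rintro ⟨A, hA₀, hAinf, hAδ⟩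
  have hA : ∀ d ∈ SIP A, 0 < d → Int.fract ((d : ℝ) * a) < δ := fun d hd hd₀ => (hAδ ⟨hd, hd₀⟩).2
  obtain ⟨x₀, hx₀⟩ := hAinf.nonempty
  set c := Int.fract ((x₀ : ℝ) * a)
  have hc : 0 < c := (Int.fract_nonneg _).lt_of_ne' (ha.fract_intCast_mul_ne_zero (hA₀ hx₀).ne')
  have hδ₀ : 0 < δ := hc.trans (hA x₀ (subset_SIP hx₀) (hA₀ hx₀))
  obtain ⟨n, hn⟩ := exists_nat_ge (δ / c)
  obtain ⟨F, hF, rfl⟩ := (hAinf.sdiff (Set.finite_Ioc 0 x₀)).exists_subset_card_eq n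
  have hcF : ∀ x ∈ F, c ≤ Int.fract ((x : ℝ) * a) := by
    intro x hx
    obtain ⟨hxA, hxx₀⟩ := hF hx
    have : x₀ < x := by
      have := hA₀ hxA
      simp only [Set.mem_Ioc, Set.mem_ofPred_eq] at *
      omega
    exact (fract_mul_lt_fract_mul ha hA₀ hδ hA hx₀ hxA this).le
  have hsum := F.card_nsmul_le_sum _ c hcF
  rw [nsmul_eq_mul] at hsum
  rw [div_le_iff₀ hc] at hn
  linarith [sum_fract_mul_lt hA₀ hδ₀ hδ hA fun x hx => (hF hx).1]

theorem not_isSIPSet_one_sub_lt_fract (ha : Irrational a) (hδ : δ ≤ 1 / 2) :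
    ¬ IsSIPSet {n : ℤ | 0 < n ∧ 1 - δ < Int.fract ((n : ℝ) * a)} := by
  have : {n : ℤ | 0 < n ∧ 1 - δ < Int.fract ((n : ℝ) * a)} =
      {n : ℤ | 0 < n ∧ Int.fract ((n : ℝ) * -a) < δ} := by
    ext n
    simp only [Set.mem_ofPred_eq, and_congr_right_iff]
    intro hn
    rw [mul_neg, Int.fract_neg (ha.fract_intCast_mul_ne_zero hn.ne'), sub_lt_comm]
  rw [this]
  exact not_isSIPSet_fract_lt ha.neg hδ

end SIP

/-- the family of SIP sets fails the Ramsey property. Concretely,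
for any irrational `a`, with `B₁ = {n ∈ ℕ : fract(n·a) ∈ [0,1/8)}` and
`B₂ = {n ∈ ℕ : fract(n·a) ∈ (7/8,1)}`, the union `B₁ ∪ B₂` is an SIP set but
neither `B₁` nor `B₂` is an SIP set. -/
theorem sip_not_filterdual (a : ℝ) (ha : Irrational a) :
    IsSIPSet ({n : ℤ | 0 < n ∧ Int.fract ((n : ℝ) * a) < 1 / 8} ∪
        {n : ℤ | 0 < n ∧ 7 / 8 < Int.fract ((n : ℝ) * a)}) ∧
      ¬ IsSIPSet {n : ℤ | 0 < n ∧ Int.fract ((n : ℝ) * a) < 1 / 8} ∧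
      ¬ IsSIPSet {n : ℤ | 0 < n ∧ 7 / 8 < Int.fract ((n : ℝ) * a)} := by
  rw [show (7 / 8 : ℝ) = 1 - 1 / 8 by norm_num]
  exact ⟨isSIPSet_fract_lt_union_one_sub_lt_fract (by norm_num),
    not_isSIPSet_fract_lt ha (by norm_num), not_isSIPSet_one_sub_lt_fract ha (by norm_num)⟩
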